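/- arXiv:hep-th/0702126 — 7 statements merged into one kernel-verified Lean document; each statement's English description precedes it below -/
import Mathlib

section
/- Let V be a finite-dimensional real vector space and let J₊, J₋ be two complex structures on V (linear endomorphisms with J ∘ J = −id_V). Then the kernel of the commutator [J₊, J₋] = J₊ ∘ J₋ − J₋ ∘ J₊ decomposes as the internal direct sum of the kernels of J₊ − J₋ and of J₊ + J₋; that is, ker(J₊ − J₋) ∩ ker(J₊ + J₋) = {0} and ker [J₊, J₋] = ker(J₊ − J₋) + ker(J₊ + J₋). -/
/-!
With `B² = -1` one has `1 + BA = B(A - B)` and `1 - BA = -B(A + B)`, so the two kernels are the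
`∓1`-eigenspaces of `T = BA`. On `ker [A, B]` the maps `A` and `B` commute, hence
`T² = B²A² = 1` there, and `v = ½(v + Tv) + ½(v - Tv)` splits `v` along the two eigenspaces.
Conversely `[A, B] = (A - B)(A + B) = -(A + B)(A - B)` because `A² = B²`, and the two kernels
meet in `ker A ⊓ ker B = 0` since `2` is invertible.
-/

open LinearMap

namespace Module.End

variable {R M : Type*} [Ring R] [AddCommGroup M] [Module R M]

theorem ker_one_sub_mul_self_le_sup [Invertible (2 : R)] (T : Module.End R M) :
    ker (1 - T * T) ≤ ker (1 - T) ⊔ ker (1 + T) := by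
  intro v hv
  have hplus : (1 + T) v ∈ ker (1 - T) := by
    rw [mem_ker, ← mul_apply, show (1 - T) * (1 + T) = 1 - T * T by noncomm_ring]
    exact hv
  have hminus : (1 - T) v ∈ ker (1 + T) := by
    rw [mem_ker, ← mul_apply, show (1 + T) * (1 - T) = 1 - T * T by noncomm_ring]
    exact hv
  have hsum : (1 + T) v + (1 - T) v = (2 : R) • v := by
    rw [LinearMap.add_apply, LinearMap.sub_apply, one_apply, two_smul]; abel
  have hsplit : v = ⅟(2 : R) • (1 + T) v + ⅟(2 : R) • (1 - T) v := by
    rw [← smul_add, hsum, smul_smul, invOf_mul_self, one_smul]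
  rw [hsplit]
  exact Submodule.add_mem_sup (Submodule.smul_mem _ _ hplus) (Submodule.smul_mem _ _ hminus)

theorem ker_sub_inf_ker_add [Invertible (2 : R)] (A B : Module.End R M) :
    ker (A - B) ⊓ ker (A + B) = ker A ⊓ ker B := by
  ext v
  simp only [Submodule.mem_inf, mem_ker, LinearMap.sub_apply, LinearMap.add_apply, sub_eq_zero,
    add_eq_zero_iff_eq_neg]
  constructor
  · rintro ⟨hsub, hadd⟩
    have hA : A v = 0 := by
      rw [← one_smul R (A v), ← invOf_mul_self (2 : R), mul_smul, two_smul]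
      nth_rw 1 [hsub]
      rw [hadd, add_neg_cancel, smul_zero]
    exact ⟨hA, by rw [← hsub, hA]⟩
  · rintro ⟨hA, hB⟩
    simp [hA, hB]

variable {A B : Module.End R M}

theorem ker_eq_bot_of_mul_self_eq_neg_one (hA : A * A = -1) : ker A = ⊥ :=
  ker_eq_bot_of_inverse (g := -A) (by rw [← mul_eq_comp, neg_mul, hA, neg_neg, one_eq_id])

theorem ker_one_add_mul_eq_ker_sub (hB : B * B = -1) : ker (1 + B * A) = ker (A - B) := by
  rw [show 1 + B * A = B * (A - B) by rw [mul_sub, hB, sub_neg_eq_add, add_comm], mul_eq_comp,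
    ker_comp_of_ker_eq_bot _ (ker_eq_bot_of_mul_self_eq_neg_one hB)]

theorem ker_one_sub_mul_eq_ker_add (hB : B * B = -1) : ker (1 - B * A) = ker (A + B) := by
  rw [show 1 - B * A = -B * (A + B) by rw [neg_mul, mul_add, hB]; abel, mul_eq_comp,
    ker_comp_of_ker_eq_bot _ (ker_eq_bot_of_mul_self_eq_neg_one (by rw [neg_mul_neg, hB]))]

theorem one_sub_sq_mul_eq_mul_commutator (hA : A * A = -1) (hB : B * B = -1) :
    1 - B * A * (B * A) = B * A * (A * B - B * A) := by
  rw [mul_sub, show B * A * (A * B) = B * (A * A) * B by noncomm_ring, hA, mul_neg_one, neg_mul,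
    hB, neg_neg, mul_assoc]

theorem ker_commutator_le_sup [Invertible (2 : R)] (hA : A * A = -1) (hB : B * B = -1) :
    ker (A * B - B * A) ≤ ker (A - B) ⊔ ker (A + B) := by
  rw [← ker_one_add_mul_eq_ker_sub hB, ← ker_one_sub_mul_eq_ker_add hB, sup_comm]
  refine le_trans ?_ (ker_one_sub_mul_self_le_sup (B * A))
  rw [one_sub_sq_mul_eq_mul_commutator hA hB, mul_eq_comp]
  exact ker_le_ker_comp _ _

theorem sup_le_ker_commutator (hAB : A * A = B * B) :
    ker (A - B) ⊔ ker (A + B) ≤ ker (A * B - B * A) := by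
  have hsub : A * B - B * A = -((A + B) * (A - B)) := by
    rw [add_mul, mul_sub, mul_sub, hAB]; abel
  have hadd : A * B - B * A = (A - B) * (A + B) := by
    rw [sub_mul, mul_add, mul_add, hAB]; abel
  refine sup_le ?_ ?_
  · rw [hsub, ker_neg, mul_eq_comp]
    exact ker_le_ker_comp _ _
  · rw [hadd, mul_eq_comp]
    exact ker_le_ker_comp _ _

end Module.End

open Module.End in
theorem kernel_commutator_decomposition_general
    (V : Type*) [AddCommGroup V] [Module ℝ V]
    (Jp Jm : V →ₗ[ℝ] V)
    (hJp : Jp ∘ₗ Jp = -LinearMap.id) (hJm : Jm ∘ₗ Jm = -LinearMap.id) :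
    LinearMap.ker (Jp - Jm) ⊓ LinearMap.ker (Jp + Jm) = ⊥ ∧
    LinearMap.ker (Jp ∘ₗ Jm - Jm ∘ₗ Jp) =
      LinearMap.ker (Jp - Jm) ⊔ LinearMap.ker (Jp + Jm) := by
  simp only [← mul_eq_comp, ← one_eq_id] at hJp hJm ⊢
  refine ⟨?_, le_antisymm (ker_commutator_le_sup hJp hJm) ?_⟩
  · rw [ker_sub_inf_ker_add, ker_eq_bot_of_mul_self_eq_neg_one hJp, bot_inf_eq]
  · exact sup_le_ker_commutator (hJp.trans hJm.symm)

/-- For two complex structures `J₊, J₋` on a finite-dimensional real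
vector space `V`, the kernel of the commutator `[J₊, J₋]` is the internal direct sum
of `ker (J₊ - J₋)` and `ker (J₊ + J₋)`. -/
theorem kernel_commutator_decomposition
    (V : Type*) [AddCommGroup V] [Module ℝ V] [FiniteDimensional ℝ V]
    (Jp Jm : V →ₗ[ℝ] V)
    (hJp : Jp ∘ₗ Jp = -LinearMap.id) (hJm : Jm ∘ₗ Jm = -LinearMap.id) :
    LinearMap.ker (Jp - Jm) ⊓ LinearMap.ker (Jp + Jm) = ⊥ ∧
    LinearMap.ker (Jp ∘ₗ Jm - Jm ∘ₗ Jp) =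
      LinearMap.ker (Jp - Jm) ⊔ LinearMap.ker (Jp + Jm) :=
  kernel_commutator_decomposition_general V Jp Jm hJp hJm
end

section
/- Let V be a finite-dimensional real vector space, g a positive-definite symmetric bilinear form on V, and J₊, J₋ two g-hermitian complex structures on V. Then V decomposes as the internal direct sum V = ker(J₊ − J₋) ⊕ ker(J₊ + J₋) ⊕ range [J₊, J₋], and the three summands are pairwise orthogonal with respect to g. -/
/-- For two `g`-hermitian complex structures `J₊, J₋` on a
finite-dimensional real vector space `V` with `g` positive-definite symmetric,
`V` is the internal direct sum of `ker (J₊ - J₋)`, `ker (J₊ + J₋)` and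
`range [J₊, J₋]`, and the three summands are pairwise `g`-orthogonal. -/
theorem generalized_kahler_decomposition
    (V : Type*) [AddCommGroup V] [Module ℝ V] [FiniteDimensional ℝ V]
    (g : V →ₗ[ℝ] V →ₗ[ℝ] ℝ)
    (hsymm : ∀ u v : V, g u v = g v u)
    (hpos : ∀ v : V, v ≠ 0 → 0 < g v v)
    (Jp Jm : V →ₗ[ℝ] V)
    (hJp : Jp ∘ₗ Jp = -LinearMap.id) (hJm : Jm ∘ₗ Jm = -LinearMap.id)
    (hgp : ∀ u v : V, g (Jp u) (Jp v) = g u v)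
    (hgm : ∀ u v : V, g (Jm u) (Jm v) = g u v) :
    DirectSum.IsInternal
      (![LinearMap.ker (Jp - Jm), LinearMap.ker (Jp + Jm),
         LinearMap.range (Jp ∘ₗ Jm - Jm ∘ₗ Jp)] : Fin 3 → Submodule ℝ V) ∧
    (∀ u ∈ LinearMap.ker (Jp - Jm), ∀ v ∈ LinearMap.ker (Jp + Jm), g u v = 0) ∧
    (∀ u ∈ LinearMap.ker (Jp - Jm),
      ∀ v ∈ LinearMap.range (Jp ∘ₗ Jm - Jm ∘ₗ Jp), g u v = 0) ∧
    (∀ u ∈ LinearMap.ker (Jp + Jm),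
      ∀ v ∈ LinearMap.range (Jp ∘ₗ Jm - Jm ∘ₗ Jp), g u v = 0) := by
  classical
  letI core : InnerProductSpace.Core ℝ V :=
  { inner := fun u v => g u v
    conj_inner_symm := fun u v => by simpa using hsymm v u
    re_inner_nonneg := fun x => by
      by_cases h : x = 0
      · simp [h]
      · simpa using (hpos x h).le
    add_left := fun x y z => by simp
    smul_left := fun x y r => by simp
    definite := fun x hx => by
      by_contra h
      exact absurd hx (ne_of_gt (hpos x h)) }
  letI : NormedAddCommGroup V := core.toNormedAddCommGroup
  letI : InnerProductSpace ℝ V := InnerProductSpace.ofCore core.toCore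
  set A := Jp - Jm with hA
  set B := Jp + Jm with hB
  set C := Jp ∘ₗ Jm - Jm ∘ₗ Jp with hC
  have hJp2 : ∀ v : V, Jp (Jp v) = -v := fun v => by
    have := LinearMap.ext_iff.mp hJp v; simpa using this
  have hJm2 : ∀ v : V, Jm (Jm v) = -v := fun v => by
    have := LinearMap.ext_iff.mp hJm v; simpa using this
  have skp : ∀ u v : V, g (Jp u) v = - g u (Jp v) := fun u v => by
    have h := hgp u (Jp v)
    rw [hJp2 v] at h
    simp only [map_neg] at h
    linarith
  have skm : ∀ u v : V, g (Jm u) v = - g u (Jm v) := fun u v => by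
    have h := hgm u (Jm v)
    rw [hJm2 v] at h
    simp only [map_neg] at h
    linarith
  have skA : ∀ u v : V, g (A u) v = - g u (A v) := fun u v => by
    have h1 := skp u v; have h2 := skm u v
    simp only [hA, LinearMap.sub_apply, map_sub] at *
    linarith
  have skB : ∀ u v : V, g (B u) v = - g u (B v) := fun u v => by
    have h1 := skp u v; have h2 := skm u v
    simp only [hB, LinearMap.add_apply, map_add] at *
    linarith
  have hAB : ∀ v : V, A (B v) = C v := fun v => by
    simp only [hA, hB, hC, LinearMap.sub_apply, LinearMap.add_apply, LinearMap.comp_apply,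
      map_add, hJp2, hJm2]
    abel
  have hBA : ∀ v : V, B (A v) = -(C v) := fun v => by
    simp only [hA, hB, hC, LinearMap.sub_apply, LinearMap.add_apply, LinearMap.comp_apply,
      map_sub, hJp2, hJm2]
    abel
  have skC : ∀ u v : V, g (C u) v = - g u (C v) := fun u v => by
    have h1 : g (C u) v = - g (B u) (A v) := by rw [← hAB u, skA]
    have h2 : g (B u) (A v) = - g u (B (A v)) := skB u (A v)
    rw [hBA v] at h2
    simp only [map_neg] at h2
    rw [h1, h2]; ring
  -- pairwise orthogonality
  have o1 : ∀ u ∈ LinearMap.ker A, ∀ v ∈ LinearMap.ker B, g u v = 0 := by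
    intro u hu v hv
    rw [LinearMap.mem_ker] at hu hv
    have hu' : Jp u = Jm u := sub_eq_zero.mp (by simpa [hA] using hu)
    have hv' : Jp v = -(Jm v) := eq_neg_of_add_eq_zero_left (by simpa [hB] using hv)
    have h := hgp u v
    rw [hu', hv'] at h
    simp only [map_neg] at h
    rw [hgm] at h
    linarith
  have o2 : ∀ u ∈ LinearMap.ker A, ∀ v ∈ LinearMap.range C, g u v = 0 := by
    intro u hu v hv
    rw [LinearMap.mem_ker] at hu
    obtain ⟨w, rfl⟩ := hv
    rw [← hAB w]
    have h := skA u (B w)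
    rw [hu] at h
    simp only [map_zero, LinearMap.zero_apply] at h
    linarith
  have o3 : ∀ u ∈ LinearMap.ker B, ∀ v ∈ LinearMap.range C, g u v = 0 := by
    intro u hu v hv
    rw [LinearMap.mem_ker] at hu
    obtain ⟨w, rfl⟩ := hv
    have hcw : C w = -(B (A w)) := by rw [hBA w, neg_neg]
    rw [hcw, map_neg]
    have h := skB u (A w)
    rw [hu] at h
    simp only [map_zero, LinearMap.zero_apply] at h
    linarith
  -- orthogonal complement of kernel is range for skew maps
  have key : ∀ (T : V →ₗ[ℝ] V), (∀ u v : V, g (T u) v = - g u (T v)) →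
      (LinearMap.ker T)ᗮ ≤ LinearMap.range T := by
    intro T hT
    have hle : LinearMap.range T ≤ (LinearMap.ker T)ᗮ := by
      rintro _ ⟨x, rfl⟩
      rw [Submodule.mem_orthogonal]
      intro u hu
      rw [LinearMap.mem_ker] at hu
      show g u (T x) = 0
      have h := hT u x
      rw [hu] at h
      simp only [map_zero, LinearMap.zero_apply] at h
      linarith
    have heq : LinearMap.range T = (LinearMap.ker T)ᗮ := by
      apply Submodule.eq_of_le_of_finrank_le hle
      have h1 := Submodule.finrank_add_finrank_orthogonal (LinearMap.ker T)
      have h2 := LinearMap.finrank_range_add_finrank_ker T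
      omega
    rw [← heq]
  -- the three subspaces span
  have htop : LinearMap.ker A ⊔ (LinearMap.ker B ⊔ LinearMap.range C) = ⊤ := by
    rw [← Submodule.orthogonal_eq_bot_iff, Submodule.eq_bot_iff]
    intro v hv
    have hvA : v ∈ (LinearMap.ker A)ᗮ := Submodule.orthogonal_le le_sup_left hv
    have hvB : v ∈ (LinearMap.ker B)ᗮ :=
      Submodule.orthogonal_le (le_trans le_sup_left le_sup_right) hv
    have hvC : v ∈ (LinearMap.range C)ᗮ :=
      Submodule.orthogonal_le (le_trans le_sup_right le_sup_right) hv
    have hCv : C v = 0 := by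
      by_contra h
      have h1 : g (C v) (C v) = - g v (C (C v)) := skC v (C v)
      have h2 : g (C (C v)) v = 0 :=
        (Submodule.mem_orthogonal _ _).mp hvC _ ⟨C v, rfl⟩
      rw [hsymm] at h2
      rw [h2] at h1
      simp only [neg_zero] at h1
      exact absurd h1 (ne_of_gt (hpos _ h))
    obtain ⟨x, hx⟩ := key A skA hvA
    have hBv : B v ∈ LinearMap.ker A := by
      rw [LinearMap.mem_ker, hAB v, hCv]
    have hBvC : B v = -(C x) := by rw [← hx, hBA x]
    have hBv0 : B v = 0 := by
      by_contra h
      have h1 : g (B v) (C x) = 0 := o2 (B v) hBv (C x) ⟨x, rfl⟩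
      have h2 : g (B v) (B v) = 0 := by
        rw [hBvC] at h1 ⊢
        simp only [map_neg]
        simpa using h1
      exact absurd h2 (ne_of_gt (hpos _ h))
    have hvk : v ∈ LinearMap.ker B := LinearMap.mem_ker.mpr hBv0
    have h2 : g v v = 0 := (Submodule.mem_orthogonal _ _).mp hvB v hvk
    by_contra h
    exact absurd h2 (ne_of_gt (hpos v h))
  set f : Fin 3 → Submodule ℝ V :=
    ![LinearMap.ker A, LinearMap.ker B, LinearMap.range C] with hf
  have hf0 : f 0 = LinearMap.ker A := rfl
  have hf1 : f 1 = LinearMap.ker B := rfl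
  have hf2 : f 2 = LinearMap.range C := rfl
  have hsup : (⨆ i, f i) = ⊤ := by
    rw [eq_top_iff, ← htop]
    refine sup_le ?_ (sup_le ?_ ?_)
    · exact hf0 ▸ le_iSup f 0
    · exact hf1 ▸ le_iSup f 1
    · exact hf2 ▸ le_iSup f 2
  have hofam : OrthogonalFamily ℝ (fun i => (f i : Submodule ℝ V))
      (fun i => (f i).subtypeₗᵢ) := by
    intro i j hij x y
    fin_cases i <;> fin_cases j
    · exact absurd rfl hij
    · exact o1 x.1 x.2 y.1 y.2
    · exact o2 x.1 x.2 y.1 y.2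
    · show g x.1 y.1 = 0
      rw [hsymm]; exact o1 y.1 y.2 x.1 x.2
    · exact absurd rfl hij
    · exact o3 x.1 x.2 y.1 y.2
    · show g x.1 y.1 = 0
      rw [hsymm]; exact o2 y.1 y.2 x.1 x.2
    · show g x.1 y.1 = 0
      rw [hsymm]; exact o3 y.1 y.2 x.1 x.2
    · exact absurd rfl hij
  have hindep := hofam.independent
  exact ⟨(DirectSum.isInternal_submodule_iff_iSupIndep_and_iSup_eq_top f).mpr
    ⟨hindep, hsup⟩, o1, o2, o3⟩
end

section
/- Let V be a finite-dimensional real vector space, g a positive-definite symmetric bilinear form on V, and J₊, J₋ two g-hermitian complex structures on V. Then the dimension of the range of the commutator [J₊, J₋] = J₊ ∘ J₋ − J₋ ∘ J₊ is divisible by 4. -/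
open Module LinearMap

universe u

theorem even_finrank_of_alt_nondeg (K : Type*) [Field K] :
    ∀ (n : ℕ) (V : Type u) [AddCommGroup V] [Module K V] [FiniteDimensional K V]
      (B : LinearMap.BilinForm K V), B.IsAlt → B.Nondegenerate →
      Module.finrank K V = n → Even n := by
  intro n
  induction n using Nat.strong_induction_on with
  | _ n ih =>
    intro V _ _ _ B halt hnd hdim
    rcases Nat.eq_zero_or_pos n with h0 | hpos
    · simp [h0]
    have hrefl : B.IsRefl := halt.isRefl
    -- V is nontrivial
    have : Nontrivial V := by
      rw [← Module.finrank_pos_iff (R := K)]; omega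
    obtain ⟨x, hx⟩ := exists_ne (0 : V)
    obtain ⟨y, hy⟩ : ∃ y, B x y ≠ 0 := by
      by_contra h
      push_neg at h
      exact hx (hnd.1 x h)
    -- x, y are linearly independent
    have hli : LinearIndependent K ![x, y] := by
      rw [LinearIndependent.pair_iff]
      intro s t hst
      have h1 : B x (s • x + t • y) = 0 := by rw [hst]; simp
      simp only [map_add, map_smul, smul_eq_mul, halt.self_eq_zero x, mul_zero,
        zero_add] at h1
      have ht : t = 0 := by
        rcases mul_eq_zero.mp h1 with h | h
        · exact h
        · exact absurd h hy
      subst ht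
      simp only [zero_smul, add_zero, smul_eq_zero] at hst
      rcases hst with h | h
      · exact ⟨h, rfl⟩
      · exact absurd h hx
    set W : Submodule K V := Submodule.span K {x, y} with hW
    have hxW : x ∈ W := Submodule.subset_span (by simp)
    have hyW : y ∈ W := Submodule.subset_span (by simp)
    have hdimW : finrank K W = 2 := by
      have hr : Set.range ![x, y] = {x, y} := by
        ext z
        constructor
        · rintro ⟨i, rfl⟩; fin_cases i <;> simp
        · rintro (rfl | rfl)
          exacts [⟨0, rfl⟩, ⟨1, rfl⟩]
      have := finrank_span_eq_card (R := K) hli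
      rw [hr] at this
      simpa using this
    -- restriction to W is nondegenerate
    have hWnd : (B.restrict W).Nondegenerate := by
      refine ((show (B.restrict W).IsAlt from fun w => halt w).isRefl.nondegenerate_iff_separatingLeft).mpr ?_
      intro ⟨w, hw⟩ hww
      obtain ⟨s, t, rfl⟩ := Submodule.mem_span_pair.mp hw
      have h1 : B (s • x + t • y) x = 0 := hww ⟨x, hxW⟩
      have h2 : B (s • x + t • y) y = 0 := hww ⟨y, hyW⟩
      simp only [map_add, map_smul, LinearMap.add_apply, LinearMap.smul_apply,
        smul_eq_mul, halt.self_eq_zero] at h1 h2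
      rw [mul_zero, zero_add] at h1
      have hyx : B y x = - B x y := (halt.neg_eq x y).symm ▸ rfl
      have ht : t = 0 := by
        rcases mul_eq_zero.mp h1 with h | h
        · exact h
        · rw [hyx, neg_eq_zero] at h; exact absurd h hy
      subst ht
      rw [mul_zero, add_zero] at h2
      have hs : s = 0 := by
        rcases mul_eq_zero.mp h2 with h | h
        · exact h
        · exact absurd h hy
      subst hs
      simp
    have hcompl : IsCompl W (B.orthogonal W) :=
      B.isCompl_orthogonal_of_restrict_nondegenerate hrefl hWnd
    have hsum : finrank K W + finrank K (B.orthogonal W) = finrank K V :=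
      Submodule.finrank_add_eq_of_isCompl hcompl
    -- restriction to orthogonal complement is nondegenerate
    have hOnd : (B.restrict (B.orthogonal W)).Nondegenerate := by
      refine ((show (B.restrict (B.orthogonal W)).IsAlt from
        fun w => halt w).isRefl.nondegenerate_iff_separatingLeft).mpr ?_
      intro ⟨v, hv⟩ hvv
      have hvV : ∀ z : V, B v z = 0 := by
        intro z
        have hz : z ∈ W ⊔ B.orthogonal W := by rw [hcompl.sup_eq_top]; trivial
        obtain ⟨w, hw, u, hu, rfl⟩ := Submodule.mem_sup.mp hz
        have h1 : B v w = 0 := hrefl _ _ (hv w hw)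
        have h2 : B v u = 0 := hvv ⟨u, hu⟩
        rw [map_add, h1, h2, add_zero]
      have : v = 0 := hnd.1 v hvV
      simpa using this
    have hOalt : (B.restrict (B.orthogonal W)).IsAlt := fun w => halt w
    have hih := ih (n - 2) (by omega) (B.orthogonal W) (B.restrict _) hOalt hOnd
      (by omega)
    obtain ⟨k, hk⟩ := hih
    exact ⟨k + 1, by omega⟩


/-- For two `g`-hermitian complex structures `J₊, J₋` on a
finite-dimensional real vector space `V` with `g` positive-definite symmetric,
the dimension of the range of the commutator `[J₊, J₋]` is divisible by 4. -/
theorem finrank_range_commutator_dvd_four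
    (V : Type*) [AddCommGroup V] [Module ℝ V] [FiniteDimensional ℝ V]
    (g : V →ₗ[ℝ] V →ₗ[ℝ] ℝ)
    (hsymm : ∀ u v : V, g u v = g v u)
    (hpos : ∀ v : V, v ≠ 0 → 0 < g v v)
    (Jp Jm : V →ₗ[ℝ] V)
    (hJp : Jp ∘ₗ Jp = -LinearMap.id) (hJm : Jm ∘ₗ Jm = -LinearMap.id)
    (hgp : ∀ u v : V, g (Jp u) (Jp v) = g u v)
    (hgm : ∀ u v : V, g (Jm u) (Jm v) = g u v) :
    4 ∣ Module.finrank ℝ (LinearMap.range (Jp ∘ₗ Jm - Jm ∘ₗ Jp)) := by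
  classical
  set C : V →ₗ[ℝ] V := Jp ∘ₗ Jm - Jm ∘ₗ Jp with hC
  have hJp2 : ∀ v, Jp (Jp v) = -v := fun v => by
    simpa using LinearMap.ext_iff.mp hJp v
  have hJm2 : ∀ v, Jm (Jm v) = -v := fun v => by
    simpa using LinearMap.ext_iff.mp hJm v
  have adjp : ∀ u v, g (Jp u) v = - g u (Jp v) := by
    intro u v
    have h := hgp u (Jp v)
    rw [hJp2, map_neg] at h
    linarith
  have adjm : ∀ u v, g (Jm u) v = - g u (Jm v) := by
    intro u v
    have h := hgm u (Jm v)
    rw [hJm2, map_neg] at h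
    linarith
  have hCapp : ∀ v, C v = Jp (Jm v) - Jm (Jp v) := fun v => rfl
  have skew : ∀ u v, g (C u) v = - g u (C v) := by
    intro u v
    rw [hCapp u, hCapp v]
    simp only [map_sub, LinearMap.sub_apply]
    have h1 : g (Jp (Jm u)) v = g u (Jm (Jp v)) := by
      rw [adjp, adjm]; ring
    have h2 : g (Jm (Jp u)) v = g u (Jp (Jm v)) := by
      rw [adjm, adjp]; ring
    rw [h1, h2]; ring
  have acp : ∀ v, C (Jp v) = - Jp (C v) := by
    intro v
    rw [hCapp, hCapp]
    simp only [map_sub, map_neg, hJp2]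
    abel
  set W : Submodule ℝ V := LinearMap.range C with hWdef
  have hJpW : ∀ x ∈ W, Jp x ∈ W := by
    rintro _ ⟨v, rfl⟩
    exact ⟨-(Jp v), by rw [map_neg, acp, neg_neg]⟩
  have hCW : ∀ x ∈ W, C x ∈ W := fun x _ => ⟨x, rfl⟩
  set Jw : W →ₗ[ℝ] W := Jp.restrict hJpW with hJwdef
  set Cw : W →ₗ[ℝ] W := C.restrict hCW with hCwdef
  have hJwcoe : ∀ w : W, (Jw w : V) = Jp (w : V) := fun w => rfl
  have hCwcoe : ∀ w : W, (Cw w : V) = C (w : V) := fun w => rfl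
  have hJw2 : ∀ w : W, Jw (Jw w) = -w := by
    intro w
    apply Subtype.ext
    show (Jw (Jw w) : V) = ((-w : W) : V)
    rw [hJwcoe, hJwcoe, hJp2]
    rfl
  have hginj : ∀ v : V, g v v = 0 → v = 0 := by
    intro v h
    by_contra hv
    exact (hpos v hv).ne' h
  have hCinj : Function.Injective Cw := by
    rw [← LinearMap.ker_eq_bot]
    rw [Submodule.eq_bot_iff]
    rintro ⟨x, hx⟩ hker
    obtain ⟨v, rfl⟩ := hx
    have hc : C (C v) = 0 := by
      have := congrArg Subtype.val (LinearMap.mem_ker.mp hker)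
      simpa [hCwcoe] using this
    have h0 : g (C v) (C v) = 0 := by
      rw [skew, hc, map_zero, neg_zero]
    exact Subtype.ext (hginj _ h0)
  have hCsurj : Function.Surjective Cw :=
    (LinearMap.injective_iff_surjective).mp hCinj
  -- ω identities on V
  have w_alt : ∀ u v : V, g v (C u) = - g u (C v) := by
    intro u v; rw [hsymm v (C u), skew]
  have w_JJ : ∀ u v : V, g (Jp u) (C (Jp v)) = - g u (C v) := by
    intro u v
    rw [acp v, map_neg, hgp]
  have w_J : ∀ u v : V, g (Jp u) (C v) = g u (C (Jp v)) := by
    intro u v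
    have h := w_JJ u (Jp v)
    rw [hJp2, map_neg, map_neg] at h
    linarith
  have w_self : ∀ u : V, g u (C u) = 0 := by
    intro u
    have := w_alt u u
    linarith
  have w_uJu : ∀ u : V, g u (C (Jp u)) = 0 := by
    intro u
    have h1 := w_J u u
    have h2 := w_alt u (Jp u)
    linarith
  -- complex module structure on W
  letI : SMul ℂ W := ⟨fun z w => z.re • w + z.im • Jw w⟩
  have hsmul : ∀ (z : ℂ) (w : W), z • w = z.re • w + z.im • Jw w := fun z w => rfl
  letI : Module ℂ W := Module.ofMinimalAxioms
    (fun r x y => by simp only [hsmul, map_add, smul_add]; abel)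
    (fun r s x => by
      simp only [hsmul, Complex.add_re, Complex.add_im, add_smul]; abel)
    (fun r s x => by
      simp only [hsmul, map_add, map_smul, hJw2, Complex.mul_re, Complex.mul_im,
        sub_smul, add_smul, smul_add, smul_smul, smul_neg]
      abel)
    (fun x => by simp [hsmul])
  haveI : IsScalarTower ℝ ℂ W := ⟨fun r z w => by
    simp only [hsmul, Complex.smul_re, Complex.smul_im, smul_add, smul_smul,
      smul_eq_mul]⟩
  haveI : FiniteDimensional ℂ W := FiniteDimensional.right ℝ ℂ W
  -- the complex bilinear form
  have hcoe : ∀ (z : ℂ) (w : W), ((z • w : W) : V)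
      = z.re • (w : V) + z.im • Jp (w : V) := fun z w => rfl
  set B : LinearMap.BilinForm ℂ W := LinearMap.mk₂ ℂ
    (fun u v => (⟨g (u : V) (C (v : V)), -(g (u : V) (C (Jp (v : V))))⟩ : ℂ))
    (fun u u' v => by
      apply Complex.ext <;> simp [map_add] <;> ring)
    (fun z u v => by
      apply Complex.ext <;>
        simp [hcoe, map_add, map_smul, smul_eq_mul, Complex.mul_re,
          Complex.mul_im, hJp2, map_neg, neg_neg, w_J, w_JJ] <;> ring)
    (fun u v v' => by
      apply Complex.ext <;> simp [map_add] <;> ring)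
    (fun z u v => by
      apply Complex.ext <;>
        simp [hcoe, map_add, map_smul, smul_eq_mul, Complex.mul_re,
          Complex.mul_im, hJp2, map_neg, neg_neg, w_J, w_JJ] <;> ring)
    with hBdef
  have halt : B.IsAlt := by
    intro u
    apply Complex.ext <;> simp [hBdef, LinearMap.mk₂_apply, w_self, w_uJu]
  have hnd : B.Nondegenerate := by
    refine (halt.isRefl.nondegenerate_iff_separatingLeft).mpr ?_
    intro u hu
    obtain ⟨v, hv⟩ := hCsurj u
    have h := congrArg Complex.re (hu v)
    simp only [hBdef, LinearMap.mk₂_apply, Complex.zero_re] at h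
    rw [← hCwcoe, hv] at h
    have : (u : V) = 0 := hginj _ h
    exact Subtype.ext this
  have heven : Even (Module.finrank ℂ W) :=
    even_finrank_of_alt_nondeg ℂ (Module.finrank ℂ W) W B halt hnd rfl
  obtain ⟨k, hk⟩ := heven
  have htower : Module.finrank ℝ ℂ * Module.finrank ℂ W = Module.finrank ℝ W :=
    Module.finrank_mul_finrank ℝ ℂ W
  rw [Complex.finrank_real_complex, hk] at htower
  exact ⟨k, by omega⟩
end

section
/- Let V be a finite-dimensional real vector space and J₊, J₋ two complex structures on V (linear endomorphisms with J ∘ J = −id_V). Then J₊ and J₋ commute (J₊ ∘ J₋ = J₋ ∘ J₊) if and only if dim ker(J₊ − J₋) + dim ker(J₊ + J₋) = dim V. -/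
/-!
With `Q = J₊ J₋`, applying the injective map `J₊` shows `ker (J₊ - J₋) = ker (Q + 1)` and
`ker (J₊ + J₋) = ker (Q - 1)`. These two eigenspaces always meet trivially, and they span `V`
exactly when `Q² = 1`, which for two square roots of `-1` is equivalent to `J₊ J₋ = J₋ J₊`.
-/

open Module LinearMap

theorem mul_self_mul_eq_one_iff_commute {A : Type*} [Ring A] {a b : A}
    (ha : a * a = -1) (hb : b * b = -1) : a * b * (a * b) = 1 ↔ a * b = b * a := by
  constructor
  · intro h
    calc a * b = -(b * b) * (a * b) := by rw [hb, neg_neg, one_mul]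
      _ = -b * (b * a * b) := by noncomm_ring
      _ = -b * (-(a * a) * (b * a * b)) := by rw [ha, neg_neg, one_mul]
      _ = b * a * (a * b * (a * b)) := by noncomm_ring
      _ = b * a := by rw [h, mul_one]
  · intro h
    calc a * b * (a * b) = a * (b * a) * b := by noncomm_ring
      _ = a * a * (b * b) := by rw [← h]; noncomm_ring
      _ = 1 := by rw [ha, hb, neg_mul_neg, one_mul]

section ComplexStructure

variable {R M : Type*} [Ring R] [AddCommGroup M] [Module R M] {J K : Module.End R M}

theorem ker_eq_bot_of_mul_self_eq_neg_one (hJ : J * J = -1) : ker J = ⊥ :=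
  ker_eq_bot_of_inverse (g := -J) (by rw [← Module.End.mul_eq_comp, neg_mul, hJ, neg_neg]; rfl)

theorem ker_sub_eq_ker_mul_add_one (hJ : J * J = -1) : ker (J - K) = ker (J * K + 1) := by
  rw [← ker_comp_of_ker_eq_bot (J - K) (ker_eq_bot_of_mul_self_eq_neg_one hJ), ← ker_neg]
  congr 1
  rw [← Module.End.mul_eq_comp, mul_sub, hJ]
  abel

theorem ker_add_eq_ker_mul_sub_one (hJ : J * J = -1) : ker (J + K) = ker (J * K - 1) := by
  rw [← ker_comp_of_ker_eq_bot (J + K) (ker_eq_bot_of_mul_self_eq_neg_one hJ)]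
  congr 1
  rw [← Module.End.mul_eq_comp, mul_add, hJ]
  abel

end ComplexStructure

section Involution

variable {K V : Type*} [Field K] [NeZero (2 : K)] [AddCommGroup V] [Module K V]

theorem disjoint_ker_add_one_ker_sub_one (Q : Module.End K V) :
    Disjoint (ker (Q + 1)) (ker (Q - 1)) := by
  refine Submodule.disjoint_def.mpr fun x hplus hminus => ?_
  rw [mem_ker, LinearMap.add_apply, Module.End.one_apply] at hplus
  rw [mem_ker, LinearMap.sub_apply, Module.End.one_apply, sub_eq_zero] at hminus
  have : (2 : K) • x = 0 := by rw [two_smul]; nth_rewrite 1 [← hminus]; exact hplus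
  exact (smul_eq_zero.mp this).resolve_left two_ne_zero

theorem sup_ker_add_one_ker_sub_one_eq_top_iff (Q : Module.End K V) :
    ker (Q + 1) ⊔ ker (Q - 1) = ⊤ ↔ Q * Q = 1 := by
  constructor
  · intro h
    rw [← sub_eq_zero, ← ker_eq_top, eq_top_iff, ← h]
    have hfac : Q * Q - 1 = (Q - 1) * (Q + 1) := by noncomm_ring
    have hfac' : Q * Q - 1 = (Q + 1) * (Q - 1) := by noncomm_ring
    exact sup_le (hfac ▸ ker_le_ker_comp _ _) (hfac' ▸ ker_le_ker_comp _ _)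
  · intro h
    have hQx (x : V) : Q (Q x) = x := by rw [← Module.End.mul_apply, h, Module.End.one_apply]
    refine Submodule.eq_top_iff'.mpr fun x => Submodule.mem_sup.mpr
      ⟨(2⁻¹ : K) • (x - Q x), ?_, (2⁻¹ : K) • (x + Q x), ?_, ?_⟩
    · simp only [mem_ker, LinearMap.add_apply, Module.End.one_apply, map_smul, map_sub, hQx]
      module
    · simp only [mem_ker, LinearMap.sub_apply, Module.End.one_apply, map_smul, map_add, hQx]
      module
    · match_scalars <;> field_simp <;> ring

theorem finrank_ker_add_one_add_finrank_ker_sub_one_eq_iff [FiniteDimensional K V]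
    (Q : Module.End K V) :
    finrank K (ker (Q + 1)) + finrank K (ker (Q - 1)) = finrank K V ↔ Q * Q = 1 := by
  rw [← sup_ker_add_one_ker_sub_one_eq_top_iff, Submodule.eq_top_iff_finrank_eq,
    ← Submodule.finrank_sup_add_finrank_inf_eq, (disjoint_ker_add_one_ker_sub_one Q).eq_bot,
    finrank_bot, add_zero]

end Involution

/-- Two complex structures `J₊, J₋` on a finite-dimensional real vector
space `V` commute if and only if
`dim ker (J₊ - J₋) + dim ker (J₊ + J₋) = dim V`. -/
theorem commute_iff_finrank_kernels_add
    (V : Type*) [AddCommGroup V] [Module ℝ V] [FiniteDimensional ℝ V]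
    (Jp Jm : V →ₗ[ℝ] V)
    (hJp : Jp ∘ₗ Jp = -LinearMap.id) (hJm : Jm ∘ₗ Jm = -LinearMap.id) :
    Jp ∘ₗ Jm = Jm ∘ₗ Jp ↔
      Module.finrank ℝ (LinearMap.ker (Jp - Jm)) +
        Module.finrank ℝ (LinearMap.ker (Jp + Jm)) = Module.finrank ℝ V := by
  have hJp' : Jp * Jp = -1 := hJp
  have hJm' : Jm * Jm = -1 := hJm
  rw [ker_sub_eq_ker_mul_add_one hJp', ker_add_eq_ker_mul_sub_one hJp',
    finrank_ker_add_one_add_finrank_ker_sub_one_eq_iff, mul_self_mul_eq_one_iff_commute hJp' hJm']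
  rfl
end

section
/- Let V be a finite-dimensional real vector space, g a symmetric bilinear form on V, B an alternating bilinear form on V, and set E = ½(g + B). Let k_L, k_R : Fin n → V satisfy the null conditions g(k_{LA}, k_{LB}) = 0 and g(k_{RA}, k_{RB}) = 0 for all A, B, and assume the n×n real matrix h with entries h_{AB} = g(k_{RA}, k_{LB}) is invertible. Define θ_R^A(u) = Σ_B g(u, k_{LB}) (h⁻¹)_{BA}, θ_L^A(u) = Σ_B (h⁻¹)_{AB} g(k_{RB}, u), and Ẽ(u, v) = E(u, v) − Σ_{A,B} θ_R^A(u) h_{AB} θ_L^B(v). Then the symmetric part g̃(u, v) := Ẽ(u, v) + Ẽ(v, u) satisfies g̃(k_{LA}, v) = 0 and g̃(k_{RA}, v) = 0 for all A and all v ∈ V. -/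
/-!
The correction term of `Ẽ` collapses, after cancelling `h` against one of the two factors of
`h⁻¹`, to `c(u, v) = Σ g(u, k_{LA}) (h⁻¹)_{AB} g(k_{RB}, v)`, and the symmetric part of `E` is
`g`, so `g̃(u, v) = g(u, v) - c(u, v) - c(v, u)`. The null conditions kill `c(k_{LA}, ·)` and
`c(·, k_{RA})`, while `g(k_{RB}, k_{LA})` and `g(k_{RA}, k_{LB})` are a column and a row of `h`,
so `h⁻¹` turns them into basis vectors and `c(v, k_{LA}) = g(v, k_{LA})`,
`c(k_{RA}, v) = g(k_{RA}, v)`.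
-/

open Matrix

namespace Matrix

variable {n R : Type*} [Fintype n] [DecidableEq n] [CommRing R]

theorem sum_sum_vecMul_inv_mul_mulVec_inv {M : Matrix n n R} (hM : IsUnit M.det) (x y : n → R) :
    ∑ i, ∑ j, (x ᵥ* M⁻¹) i * M i j * (M⁻¹ *ᵥ y) j = x ⬝ᵥ (M⁻¹ *ᵥ y) := by
  rw [Finset.sum_comm, ← dot_mulVec_eq_sum_sum, dotProduct_mulVec, vecMul_vecMul,
    nonsing_inv_mul M hM, vecMul_one, dotProduct_mulVec]

theorem inv_mulVec_col {M : Matrix n n R} (hM : IsUnit M.det) (j : n) :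
    M⁻¹ *ᵥ M.col j = Pi.single j 1 := by
  rw [← mulVec_single_one, mulVec_mulVec, nonsing_inv_mul M hM, one_mulVec]

theorem row_vecMul_inv {M : Matrix n n R} (hM : IsUnit M.det) (i : n) :
    M.row i ᵥ* M⁻¹ = Pi.single i 1 := by
  rw [← single_one_vecMul, vecMul_vecMul, mul_nonsing_inv M hM, vecMul_one]

end Matrix

theorem null_kacmoody_quotient_metric_degenerate_general
    (n : ℕ) (V : Type*) [AddCommGroup V] [Module ℝ V]
    (g B : V →ₗ[ℝ] V →ₗ[ℝ] ℝ)
    (hsymm : ∀ u v : V, g u v = g v u)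
    (halt : ∀ u v : V, B u v = -B v u)
    (E : V → V → ℝ) (hE : ∀ u v, E u v = (1/2 : ℝ) * (g u v + B u v))
    (kL kR : Fin n → V)
    (hLnull : ∀ A B', g (kL A) (kL B') = 0)
    (hRnull : ∀ A B', g (kR A) (kR B') = 0)
    (h : Matrix (Fin n) (Fin n) ℝ) (hh : ∀ A B', h A B' = g (kR A) (kL B'))
    (hinv : IsUnit h.det)
    (θL θR : Fin n → V → ℝ)
    (hθR : ∀ A u, θR A u = ∑ B', g u (kL B') * h⁻¹ B' A)
    (hθL : ∀ A u, θL A u = ∑ B', h⁻¹ A B' * g (kR B') u)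
    (Et : V → V → ℝ)
    (hEt : ∀ u v, Et u v = E u v - ∑ A, ∑ B', θR A u * h A B' * θL B' v)
    (gt : V → V → ℝ) (hgt : ∀ u v, gt u v = Et u v + Et v u) :
    (∀ A, ∀ v, gt (kL A) v = 0) ∧
    (∀ A, ∀ v, gt (kR A) v = 0) := by
  set gL : V → Fin n → ℝ := fun u B' => g u (kL B')
  set gR : V → Fin n → ℝ := fun v B' => g (kR B') v
  have hcorr : ∀ u v, ∑ A, ∑ B', θR A u * h A B' * θL B' v = gL u ⬝ᵥ (h⁻¹ *ᵥ gR v) := by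
    intro u v
    have hθRu : (fun A => θR A u) = gL u ᵥ* h⁻¹ := funext fun A => hθR A u
    have hθLv : (fun B' => θL B' v) = h⁻¹ *ᵥ gR v := funext fun B' => hθL B' v
    rw [← sum_sum_vecMul_inv_mul_mulVec_inv hinv, ← hθRu, ← hθLv]
  have hgt' : ∀ u v, gt u v = g u v - gL u ⬝ᵥ (h⁻¹ *ᵥ gR v) - gL v ⬝ᵥ (h⁻¹ *ᵥ gR u) := by
    intro u v
    rw [hgt, hEt, hEt, hE, hE, hcorr, hcorr]
    linarith [hsymm u v, halt u v]
  refine ⟨fun A v => ?_, fun A v => ?_⟩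
  · have hgL : gL (kL A) = 0 := funext (hLnull A)
    have hgR : gR (kL A) = h.col A := funext fun B' => (hh B' A).symm
    rw [hgt', hgL, hgR, inv_mulVec_col hinv, zero_dotProduct, dotProduct_single_one, hsymm]
    ring
  · have hgL : gL (kR A) = h.row A := funext fun B' => (hh A B').symm
    have hgR : gR (kR A) = 0 := funext fun B' => hRnull B' A
    rw [hgt', hgL, hgR, dotProduct_mulVec, row_vecMul_inv hinv, single_one_dotProduct, mulVec_zero,
      dotProduct_zero]
    ring

/-- The quotient metric of the null Kac-Moody quotient is
degenerate along all isometry directions.  With `E = ½(g + B)`, connections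
`θ_L, θ_R` built from the invertible pairing `h_{AB} = g(k_{RA}, k_{LB})` of the
two null families, and `Ẽ = E - Σ θ_R^A h_{AB} θ_L^B`, the symmetric part
`g̃(u,v) = Ẽ(u,v) + Ẽ(v,u)` satisfies `g̃(k_{LA}, ·) = 0` and `g̃(k_{RA}, ·) = 0`. -/
theorem null_kacmoody_quotient_metric_degenerate
    (n : ℕ) (V : Type*) [AddCommGroup V] [Module ℝ V] [FiniteDimensional ℝ V]
    (g B : V →ₗ[ℝ] V →ₗ[ℝ] ℝ)
    (hsymm : ∀ u v : V, g u v = g v u)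
    (halt : ∀ u v : V, B u v = -B v u)
    (E : V → V → ℝ) (hE : ∀ u v, E u v = (1/2 : ℝ) * (g u v + B u v))
    (kL kR : Fin n → V)
    (hLnull : ∀ A B', g (kL A) (kL B') = 0)
    (hRnull : ∀ A B', g (kR A) (kR B') = 0)
    (h : Matrix (Fin n) (Fin n) ℝ) (hh : ∀ A B', h A B' = g (kR A) (kL B'))
    (hinv : IsUnit h.det)
    (θL θR : Fin n → V → ℝ)
    (hθR : ∀ A u, θR A u = ∑ B', g u (kL B') * h⁻¹ B' A)
    (hθL : ∀ A u, θL A u = ∑ B', h⁻¹ A B' * g (kR B') u)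
    (Et : V → V → ℝ)
    (hEt : ∀ u v, Et u v = E u v - ∑ A, ∑ B', θR A u * h A B' * θL B' v)
    (gt : V → V → ℝ) (hgt : ∀ u v, gt u v = Et u v + Et v u) :
    (∀ A, ∀ v, gt (kL A) v = 0) ∧
    (∀ A, ∀ v, gt (kR A) v = 0) :=
  null_kacmoody_quotient_metric_degenerate_general n V g B hsymm halt E hE kL kR hLnull hRnull h hh
    hinv θL θR hθR hθL Et hEt gt hgt
end

section
/- Let U ⊆ ℂⁿ be a nonempty connected open set. Let k : Fin m → (U → ℂⁿ) be a family of holomorphic vector fields that pairwise commute, i.e., for all a, b and all z ∈ U, the complex derivative of k_b at z applied to k_a(z) equals the complex derivative of k_a at z applied to k_b(z). Let K : U → ℝ be smooth (with ℂⁿ regarded as a real vector space) and let f : Fin m → (U → ℂ) be holomorphic functions such that for every a and every z ∈ U the real directional derivative of K at z along the vector k_a(z) equals 2 Re(f_a(z)). Then for every pair a, b there exists a real constant c_{ab} such that for all z ∈ U, Df_b(z)(k_a(z)) − Df_a(z)(k_b(z)) = i·c_{ab}, where Df denotes the complex Fréchet derivative; in particular this holomorphic function is constant and purely imaginary. -/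
open Metric Complex Filter Set

lemma re_part_zero
    (n m : ℕ) (U : Set (Fin n → ℂ)) (hUopen : IsOpen U)
    (k : Fin m → (Fin n → ℂ) → (Fin n → ℂ))
    (hk : ∀ a, DifferentiableOn ℂ (k a) U)
    (hcomm : ∀ a b, ∀ z ∈ U,
      fderiv ℂ (k b) z (k a z) = fderiv ℂ (k a) z (k b z))
    (K : (Fin n → ℂ) → ℝ) (hK : ContDiffOn ℝ (⊤ : ℕ∞) K U)
    (f : Fin m → (Fin n → ℂ) → ℂ)
    (hf : ∀ a, DifferentiableOn ℂ (f a) U)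
    (hKf : ∀ a, ∀ z ∈ U, fderiv ℝ K z (k a z) = 2 * (f a z).re) :
    ∀ a b, ∀ z ∈ U,
      (fderiv ℂ (f b) z (k a z) - fderiv ℂ (f a) z (k b z)).re = 0 := by
  intro a b z hz
  have hUz : U ∈ nhds z := hUopen.mem_nhds hz
  have hKz : ContDiffAt ℝ (⊤ : ℕ∞) K z := hK.contDiffAt hUz
  have hK1 : ContDiffAt ℝ 1 (fderiv ℝ K) z := hKz.fderiv_right (WithTop.coe_le_coe.mpr le_top)
  set H := fderiv ℝ (fderiv ℝ K) z with hH
  have hHd : HasFDerivAt (fderiv ℝ K) H z :=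
    (hK1.differentiableAt one_ne_zero).hasFDerivAt
  have hev : ∀ᶠ y in nhds z, HasFDerivAt K (fderiv ℝ K y) y := by
    filter_upwards [hUopen.eventually_mem hz] with y hy
    exact ((hK.contDiffAt (hUopen.mem_nhds hy)).differentiableAt (by simp)).hasFDerivAt
  have hsymm : ∀ v w, H v w = H w v :=
    second_derivative_symmetric_of_eventually hev hHd
  -- the basic identity for each index
  have main : ∀ c : Fin m, ∀ u : Fin n → ℂ,
      fderiv ℝ K z (fderiv ℂ (k c) z u) + H u (k c z) = 2 * (fderiv ℂ (f c) z u).re := by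
    intro c u
    have hkc : DifferentiableAt ℂ (k c) z := (hk c z hz).differentiableAt hUz
    have hfc : DifferentiableAt ℂ (f c) z := (hf c z hz).differentiableAt hUz
    have hkr : HasFDerivAt (k c) ((fderiv ℂ (k c) z).restrictScalars ℝ) z :=
      hkc.hasFDerivAt.restrictScalars ℝ
    have lhs : HasFDerivAt (fun w => fderiv ℝ K w (k c w))
        ((fderiv ℝ K z).comp ((fderiv ℂ (k c) z).restrictScalars ℝ) + H.flip (k c z)) z :=
      hHd.clm_apply hkr
    have rhs0 : HasFDerivAt (fun w => (f c w).re)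
        (Complex.reCLM.comp ((fderiv ℂ (f c) z).restrictScalars ℝ)) z :=
      Complex.reCLM.hasFDerivAt.comp z (hfc.hasFDerivAt.restrictScalars ℝ)
    have rhs : HasFDerivAt (fun w => 2 * (f c w).re)
        ((2:ℝ) • (Complex.reCLM.comp ((fderiv ℂ (f c) z).restrictScalars ℝ))) z :=
      rhs0.const_mul 2
    have rhs' : HasFDerivAt (fun w => fderiv ℝ K w (k c w))
        ((2:ℝ) • (Complex.reCLM.comp ((fderiv ℂ (f c) z).restrictScalars ℝ))) z := by
      apply rhs.congr_of_eventuallyEq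
      filter_upwards [hUopen.eventually_mem hz] with y hy
      exact (hKf c y hy)
    have heq := lhs.unique rhs'
    have := congrArg (fun (L : (Fin n → ℂ) →L[ℝ] ℝ) => L u) heq
    simpa using this
  have e1 := main a (k b z)
  have e2 := main b (k a z)
  rw [← hcomm a b z hz] at e1
  rw [hsymm (k b z) (k a z)] at e1
  have : 2 * (fderiv ℂ (f b) z (k a z)).re = 2 * (fderiv ℂ (f a) z (k b z)).re := by
    rw [← e1, ← e2]
  simp only [Complex.sub_re]
  linarith


lemma keyHolo {E : Type*} [NormedAddCommGroup E] [NormedSpace ℂ E]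
    {F : E → ℂ} {U : Set E} (hU : IsOpen U) (hF : DifferentiableOn ℂ F U)
    {γ v : ℂ → E} {T : Set ℂ} (hT : IsOpen T)
    (hγ : DifferentiableOn ℂ γ T) (hv : DifferentiableOn ℂ v T)
    (hmem : ∀ t ∈ T, γ t ∈ U) :
    DifferentiableOn ℂ (fun t => fderiv ℂ F (γ t) (v t)) T := by
  intro t₀ ht₀
  obtain ⟨r₁, hr₁, hball⟩ : ∃ r₁ > 0, closedBall t₀ r₁ ⊆ T := by
    rcases Metric.isOpen_iff.1 hT t₀ ht₀ with ⟨r, hr, h⟩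
    exact ⟨r/2, by positivity, (closedBall_subset_ball (by linarith)).trans h⟩
  set Φ : ℂ × ℂ → E := fun p => γ p.1 + p.2 • v p.1 with hΦdef
  have hΦc : ContinuousOn Φ (T ×ˢ (univ : Set ℂ)) := by
    apply ContinuousOn.add
    · exact hγ.continuousOn.comp continuous_fst.continuousOn (fun p hp => hp.1)
    · exact continuous_snd.continuousOn.smul
        (hv.continuousOn.comp continuous_fst.continuousOn (fun p hp => hp.1))
  have hW : IsOpen ((T ×ˢ (univ : Set ℂ)) ∩ Φ ⁻¹' U) :=
    hΦc.isOpen_inter_preimage (hT.prod isOpen_univ) hU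
  -- tube lemma : find ρ > 0 such that γ t + s • v t ∈ U for t ∈ closedBall t₀ r₁, ‖s‖ ≤ ρ
  obtain ⟨u, V, huo, hVo, hKu, h0V, huV⟩ :=
    generalized_tube_lemma (t := ({0} : Set ℂ)) (isCompact_closedBall t₀ r₁) isCompact_singleton hW
      (by
        rintro ⟨t, s⟩ ⟨ht, hs⟩
        simp only [mem_singleton_iff] at hs
        subst hs
        refine ⟨⟨hball ht, mem_univ _⟩, ?_⟩
        have hΦ0 : Φ (t, 0) = γ t := by simp [hΦdef]
        simp only [mem_preimage, hΦ0]
        exact hmem t (hball ht))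
  obtain ⟨ρ', hρ', hρ'V⟩ := Metric.isOpen_iff.1 hVo 0 (h0V rfl)
  set ρ : ℝ := ρ'/2 with hρdef
  have hρ : 0 < ρ := by positivity
  have hmemU : ∀ t ∈ closedBall t₀ r₁, ∀ s : ℂ, ‖s‖ ≤ ρ → γ t + s • v t ∈ U := by
    intro t ht s hs
    have : (t, s) ∈ (T ×ˢ (univ : Set ℂ)) ∩ Φ ⁻¹' U := by
      apply huV
      refine ⟨hKu ht, hρ'V ?_⟩
      simp only [mem_ball, dist_zero_right]
      linarith
    exact this.2
  have hTsub : ∀ t ∈ closedBall t₀ r₁, t ∈ T := fun t ht => hball ht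
  -- uniform bound M
  obtain ⟨M₀, hM₀⟩ : ∃ C, ∀ p ∈ closedBall t₀ r₁ ×ˢ closedBall (0:ℂ) ρ, ‖F (Φ p)‖ ≤ C := by
    apply IsCompact.exists_bound_of_continuousOn
      ((isCompact_closedBall _ _).prod (isCompact_closedBall _ _))
    apply hF.continuousOn.comp (hΦc.mono ?_) ?_
    · rintro ⟨t, s⟩ ⟨ht, _⟩
      exact ⟨hTsub t ht, mem_univ _⟩
    · rintro ⟨t, s⟩ ⟨ht, hs⟩
      exact hmemU t ht s (by simpa [dist_zero_right] using hs)
  set M : ℝ := max M₀ 0 with hMdef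
  have hM : 0 ≤ M := le_max_right _ _
  have hMb : ∀ t ∈ closedBall t₀ r₁, ∀ s : ℂ, ‖s‖ ≤ ρ → ‖F (γ t + s • v t)‖ ≤ M := by
    intro t ht s hs
    exact le_trans (hM₀ (t, s) ⟨ht, by simpa [dist_zero_right] using hs⟩) (le_max_left _ _)
  set rc : ℝ := ρ/2 with hrcdef
  have hrc : 0 < rc := by positivity
  set h : ℂ → ℂ → ℂ := fun t s => F (γ t + s • v t) with hhdef
  -- Cauchy integral formula
  have hCF : ∀ t ∈ closedBall t₀ r₁, ∀ w ∈ ball (0:ℂ) rc,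
      (∮ σ in C(0, rc), (σ - w)⁻¹ • h t σ) = (2 * Real.pi * I : ℂ) • h t w := by
    intro t ht w hw
    apply DiffContOnCl.circleIntegral_sub_inv_smul _ hw
    apply DifferentiableOn.diffContOnCl
    rw [closure_ball _ (ne_of_gt hrc)]
    intro s hs
    apply DifferentiableAt.differentiableWithinAt
    have hin : γ t + s • v t ∈ U := by
      apply hmemU t ht
      have : ‖s‖ ≤ rc := by simpa [dist_zero_right] using hs
      linarith [this]
    exact (hF.differentiableAt (hU.mem_nhds hin)).comp s
      (((differentiableAt_id.smul_const (v t)).const_add (γ t)))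
  have hconth : ∀ t ∈ closedBall t₀ r₁, ContinuousOn (h t) (sphere (0:ℂ) rc) := by
    intro t ht
    intro s hs
    have hsn : ‖s‖ = rc := by simpa [dist_zero_right] using hs
    have hin : γ t + s • v t ∈ U := hmemU t ht s (by linarith [hsn.le])
    apply ContinuousWithinAt.mono _ (subset_univ _)
    apply ContinuousAt.continuousWithinAt
    exact ((hF.differentiableAt (hU.mem_nhds hin)).comp s
      ((differentiableAt_id.smul_const (v t)).const_add (γ t))).continuousAt
  set G : ℂ → ℂ := fun t => fderiv ℂ F (γ t) (v t) with hGdef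
  set q : ℂ → ℂ → ℂ := fun s t => (h t s - h t 0) / s with hqdef
  set Q : ℂ → ℂ := fun t =>
    (2 * Real.pi * I : ℂ)⁻¹ • ∮ σ in C(0, rc), (σ * σ)⁻¹ • h t σ with hQdef
  have h2πI : (2 * Real.pi * I : ℂ) ≠ 0 := by
    simp [Real.pi_ne_zero, I_ne_zero]
  have hn2πI : ‖(2 * Real.pi * I : ℂ)‖ = 2 * Real.pi := by
    simp [norm_mul, Complex.norm_I, Complex.norm_real, Real.norm_eq_abs, _root_.abs_of_nonneg Real.pi_nonneg]
  -- the key integral bound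
  have hbound : ∀ t ∈ closedBall t₀ r₁, ∀ s : ℂ, s ≠ 0 → ‖s‖ ≤ rc/2 →
      ‖q s t - Q t‖ ≤ (2*M/rc^2) * ‖s‖ := by
    intro t ht s hs0 hs
    have hne : ∀ σ ∈ sphere (0:ℂ) rc, σ - s ≠ 0 := by
      intro σ hσ
      have hσn : ‖σ‖ = rc := by simpa [dist_zero_right] using hσ
      intro hcon
      have : σ = s := by linear_combination hcon
      rw [this] at hσn
      linarith
    have hne0 : ∀ σ ∈ sphere (0:ℂ) rc, σ ≠ 0 := by
      intro σ hσ
      have hσn : ‖σ‖ = rc := by simpa [dist_zero_right] using hσ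
      intro hcon
      rw [hcon] at hσn
      simp at hσn
      linarith
    have hcont := hconth t ht
    have hint1 : CircleIntegrable (fun σ => (σ - s)⁻¹ • h t σ) 0 rc := by
      apply ContinuousOn.circleIntegrable hrc.le
      exact (((continuousOn_id.sub continuousOn_const).inv₀ hne).smul hcont)
    have hint0 : CircleIntegrable (fun σ => σ⁻¹ • h t σ) 0 rc := by
      apply ContinuousOn.circleIntegrable hrc.le
      exact ((continuousOn_id.inv₀ hne0).smul hcont)
    have hint2 : CircleIntegrable (fun σ => ((σ - s) * σ)⁻¹ • h t σ) 0 rc := by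
      apply ContinuousOn.circleIntegrable hrc.le
      exact ((((continuousOn_id.sub continuousOn_const).mul continuousOn_id).inv₀
        (fun σ hσ => mul_ne_zero (hne σ hσ) (hne0 σ hσ))).smul hcont)
    have hint3 : CircleIntegrable (fun σ => (σ * σ)⁻¹ • h t σ) 0 rc := by
      apply ContinuousOn.circleIntegrable hrc.le
      exact (((continuousOn_id.mul continuousOn_id).inv₀
        (fun σ hσ => mul_ne_zero (hne0 σ hσ) (hne0 σ hσ))).smul hcont)
    have hI1 : (∮ σ in C(0, rc), (σ - s)⁻¹ • h t σ) = (2 * Real.pi * I : ℂ) • h t s :=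
      hCF t ht s (by simp only [mem_ball, dist_zero_right]; linarith)
    have hI0 : (∮ σ in C(0, rc), σ⁻¹ • h t σ) = (2 * Real.pi * I : ℂ) • h t 0 := by
      have := hCF t ht 0 (by simp [hrc])
      simpa using this
    have hsub : (∮ σ in C(0, rc), (((σ - s)⁻¹ - σ⁻¹) • h t σ)) =
        (2 * Real.pi * I : ℂ) • (h t s - h t 0) := by
      have : (fun σ : ℂ => ((σ - s)⁻¹ - σ⁻¹) • h t σ) =
          fun σ => (σ - s)⁻¹ • h t σ - σ⁻¹ • h t σ := by
        funext σ; rw [sub_smul]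
      rw [this, circleIntegral.integral_sub hint1 hint0, hI1, hI0, smul_sub]
    have hJrep : s • (∮ σ in C(0, rc), ((σ - s) * σ)⁻¹ • h t σ) =
        (2 * Real.pi * I : ℂ) • (h t s - h t 0) := by
      rw [← circleIntegral.integral_smul, ← hsub]
      apply circleIntegral.integral_congr hrc.le
      intro σ hσ
      have h1 := hne σ hσ
      have h2 := hne0 σ hσ
      simp only [smul_smul]
      congr 1
      field_simp
      ring
    have hq : q s t = (2 * Real.pi * I : ℂ)⁻¹ • ∮ σ in C(0, rc), ((σ - s) * σ)⁻¹ • h t σ := by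
      have hJ : (∮ σ in C(0, rc), ((σ - s) * σ)⁻¹ • h t σ)
          = s⁻¹ * (2 * Real.pi * I : ℂ) * (h t s - h t 0) := by
        have h5 := congrArg (fun x => s⁻¹ • x) hJrep
        simp only [smul_smul, inv_mul_cancel₀ hs0, one_smul] at h5
        rw [h5]
        simp only [smul_eq_mul]
      rw [hJ]
      show (h t s - h t 0) / s = _
      simp only [smul_eq_mul]
      field_simp
    have hdiffint : q s t - Q t = (2 * Real.pi * I : ℂ)⁻¹ •
        ∮ σ in C(0, rc), ((((σ - s) * σ)⁻¹ - (σ * σ)⁻¹) • h t σ) := by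
      rw [hq, hQdef]
      simp only
      rw [← smul_sub, ← circleIntegral.integral_sub hint2 hint3]
      congr 1
      apply circleIntegral.integral_congr hrc.le
      intro σ hσ
      show ((σ - s) * σ)⁻¹ • h t σ - (σ * σ)⁻¹ • h t σ
          = (((σ - s) * σ)⁻¹ - (σ * σ)⁻¹) • h t σ
      exact (sub_smul _ _ _).symm
    have hptwise : ∀ σ ∈ sphere (0:ℂ) rc,
        ‖(((σ - s) * σ)⁻¹ - (σ * σ)⁻¹) • h t σ‖ ≤ 2*M/rc^3 * ‖s‖ := by
      intro σ hσ
      have hσn : ‖σ‖ = rc := by simpa [dist_zero_right] using hσ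
      have h1 := hne σ hσ
      have h2 := hne0 σ hσ
      have hid : ((σ - s) * σ)⁻¹ - (σ * σ)⁻¹ = s * ((σ - s) * (σ * σ))⁻¹ := by
        field_simp
        ring
      have hσs : rc/2 ≤ ‖σ - s‖ := by
        have := norm_sub_norm_le σ s
        have h3 : ‖σ‖ - ‖s‖ ≤ ‖σ - s‖ := norm_sub_norm_le σ s
        rw [hσn] at h3
        linarith
      have hM' : ‖h t σ‖ ≤ M := by
        apply hMb t ht
        rw [hσn]
        linarith
      rw [hid, norm_smul, norm_mul, norm_inv, norm_mul, norm_mul, hσn]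
      have hpos : (0:ℝ) < ‖σ - s‖ * (rc * rc) :=
        mul_pos (lt_of_lt_of_le (by positivity) hσs) (by positivity)
      have hBpos : (0:ℝ) < (rc/2) * (rc * rc) := by positivity
      have hinv : (‖σ - s‖ * (rc * rc))⁻¹ ≤ ((rc/2) * (rc * rc))⁻¹ := by
        apply inv_anti₀ hBpos
        apply mul_le_mul_of_nonneg_right hσs (by positivity)
      calc ‖s‖ * (‖σ - s‖ * (rc * rc))⁻¹ * ‖h t σ‖
          ≤ ‖s‖ * ((rc/2) * (rc * rc))⁻¹ * M := by
            apply mul_le_mul (mul_le_mul_of_nonneg_left hinv (norm_nonneg s)) hM'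
              (norm_nonneg _) (by positivity)
        _ = 2*M/rc^3 * ‖s‖ := by
            field_simp
    rw [hdiffint, norm_smul, norm_inv, hn2πI]
    calc (2 * Real.pi)⁻¹ * ‖∮ σ in C(0, rc), ((((σ - s) * σ)⁻¹ - (σ * σ)⁻¹) • h t σ)‖
        ≤ (2 * Real.pi)⁻¹ * (2 * Real.pi * rc * (2*M/rc^3 * ‖s‖)) := by
          apply mul_le_mul_of_nonneg_left _ (by positivity)
          exact circleIntegral.norm_integral_le_of_norm_le_const hrc.le hptwise
      _ = (2*M/rc^2) * ‖s‖ := by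
          field_simp
  -- pointwise limit : difference quotients tend to the derivative
  have hpt : ∀ t ∈ closedBall t₀ r₁,
      Tendsto (fun s => q s t) (nhdsWithin 0 {(0:ℂ)}ᶜ) (nhds (G t)) := by
    intro t ht
    have htT : t ∈ T := hTsub t ht
    have hdin : HasDerivAt (fun s : ℂ => γ t + s • v t) (v t) 0 := by
      simpa using ((hasDerivAt_id (0:ℂ)).smul_const (v t)).const_add (γ t)
    have hFd : HasFDerivAt F (fderiv ℂ F (γ t)) (γ t) :=
      (hF.differentiableAt (hU.mem_nhds (hmem t htT))).hasFDerivAt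
    have hFd' : HasFDerivAt F (fderiv ℂ F (γ t)) (γ t + (0:ℂ) • v t) := by
      simpa using hFd
    have hd : HasDerivAt (h t) (G t) 0 := hFd'.comp_hasDerivAt 0 hdin
    have := hasDerivAt_iff_tendsto_slope.mp hd
    apply this.congr
    intro s
    rw [slope_def_field, sub_zero]
  -- Q agrees with G
  have hQG : ∀ t ∈ closedBall t₀ r₁, Q t = G t := by
    intro t ht
    have hbev : ∀ᶠ s in nhdsWithin 0 {(0:ℂ)}ᶜ, ‖q s t - Q t‖ ≤ (2*M/rc^2) * ‖s‖ := by
      have h1 : ∀ᶠ s in nhds (0:ℂ), ‖s‖ ≤ rc/2 := by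
        filter_upwards [Metric.closedBall_mem_nhds (0:ℂ) (half_pos hrc)] with s hs
        simpa [dist_zero_right] using hs
      filter_upwards [h1.filter_mono nhdsWithin_le_nhds, self_mem_nhdsWithin] with s hs hs0
      exact hbound t ht s hs0 hs
    have hzero : Tendsto (fun s : ℂ => (2*M/rc^2) * ‖s‖) (nhdsWithin 0 {(0:ℂ)}ᶜ) (nhds 0) := by
      have : Tendsto (fun s : ℂ => (2*M/rc^2) * ‖s‖) (nhds 0) (nhds ((2*M/rc^2) * ‖(0:ℂ)‖)) :=
        (continuous_const.mul continuous_norm).tendsto 0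
      simpa using this.mono_left nhdsWithin_le_nhds
    have hsq : Tendsto (fun s => q s t - Q t) (nhdsWithin 0 {(0:ℂ)}ᶜ) (nhds 0) :=
      squeeze_zero_norm' hbev hzero
    have hq2 : Tendsto (fun s => q s t) (nhdsWithin 0 {(0:ℂ)}ᶜ) (nhds (Q t)) := by
      have := hsq.add (tendsto_const_nhds (x := Q t))
      simp only [zero_add] at this
      apply this.congr
      intro s
      ring
    exact tendsto_nhds_unique hq2 (hpt t ht)
  -- uniform convergence
  have hunif : TendstoUniformlyOn q G (nhdsWithin 0 {(0:ℂ)}ᶜ) (closedBall t₀ r₁) := by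
    rw [Metric.tendstoUniformlyOn_iff]
    intro ε hε
    have hδ : (0:ℝ) < min (rc/2) (ε * rc^2/(2*M+1)) := by positivity
    have h1 : ∀ᶠ s in nhds (0:ℂ), ‖s‖ < min (rc/2) (ε * rc^2/(2*M+1)) := by
      filter_upwards [Metric.ball_mem_nhds (0:ℂ) hδ] with s hs
      simpa [dist_zero_right] using hs
    filter_upwards [h1.filter_mono nhdsWithin_le_nhds, self_mem_nhdsWithin] with s hs hs0
    intro t ht
    rw [dist_comm, dist_eq_norm, ← hQG t ht]
    have hb := hbound t ht s hs0 (le_trans hs.le (min_le_left _ _))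
    calc ‖q s t - Q t‖ ≤ (2*M/rc^2) * ‖s‖ := hb
      _ ≤ ((2*M+1)/rc^2) * ‖s‖ := by gcongr; linarith
      _ < ((2*M+1)/rc^2) * (ε * rc^2/(2*M+1)) := by
          apply mul_lt_mul_of_pos_left _ (by positivity)
          exact lt_of_lt_of_le hs (min_le_right _ _)
      _ = ε := by
          field_simp
  -- eventual differentiability of the difference quotients
  have hediff : ∀ᶠ s in nhdsWithin 0 {(0:ℂ)}ᶜ,
      DifferentiableOn ℂ (fun t => q s t) (ball t₀ r₁) := by
    have h1 : ∀ᶠ s in nhds (0:ℂ), ‖s‖ ≤ ρ := by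
      filter_upwards [Metric.closedBall_mem_nhds (0:ℂ) hρ] with s hs
      simpa [dist_zero_right] using hs
    filter_upwards [h1.filter_mono nhdsWithin_le_nhds] with s hsρ
    intro t ht
    apply DifferentiableAt.differentiableWithinAt
    have ht' : t ∈ closedBall t₀ r₁ := ball_subset_closedBall ht
    have htT : t ∈ T := hTsub t ht'
    have hγt : DifferentiableAt ℂ γ t := (hγ t htT).differentiableAt (hT.mem_nhds htT)
    have hvt : DifferentiableAt ℂ v t := (hv t htT).differentiableAt (hT.mem_nhds htT)
    have hd1 : DifferentiableAt ℂ (fun t => F (γ t + s • v t)) t := by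
      apply DifferentiableAt.comp
      · exact hF.differentiableAt (hU.mem_nhds (hmemU t ht' s hsρ))
      · exact hγt.add (hvt.const_smul s)
    have hd0 : DifferentiableAt ℂ (fun t => F (γ t)) t := by
      apply DifferentiableAt.comp
      · exact hF.differentiableAt (hU.mem_nhds (hmem t htT))
      · exact hγt
    have hd0' : DifferentiableAt ℂ (fun t => F (γ t + (0:ℂ) • v t)) t := by
      simpa using hd0
    exact (hd1.sub hd0').div_const s
  have hGdiff : DifferentiableOn ℂ G (ball t₀ r₁) :=
    ((hunif.mono ball_subset_closedBall).tendstoLocallyUniformlyOn).differentiableOn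
      hediff isOpen_ball
  exact ((hGdiff.differentiableAt (isOpen_ball.mem_nhds (mem_ball_self hr₁))).differentiableWithinAt)

/-- Commuting holomorphic vector fields `k_a` on a connected open
set `U ⊆ ℂⁿ` preserving a smooth real function `K` up to the real parts of
holomorphic functions `f_a` (i.e. `dK(k_a) = 2 Re f_a`) yield obstruction
constants: `Df_b(k_a) - Df_a(k_b)` is a purely imaginary constant `i c_{ab}`. -/
theorem kahler_isometry_obstruction_constants
    (n m : ℕ) (U : Set (Fin n → ℂ)) (hUopen : IsOpen U) (hUconn : IsConnected U)
    (k : Fin m → (Fin n → ℂ) → (Fin n → ℂ))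
    (hk : ∀ a, DifferentiableOn ℂ (k a) U)
    (hcomm : ∀ a b, ∀ z ∈ U,
      fderiv ℂ (k b) z (k a z) = fderiv ℂ (k a) z (k b z))
    (K : (Fin n → ℂ) → ℝ) (hK : ContDiffOn ℝ (⊤ : ℕ∞) K U)
    (f : Fin m → (Fin n → ℂ) → ℂ)
    (hf : ∀ a, DifferentiableOn ℂ (f a) U)
    (hKf : ∀ a, ∀ z ∈ U, fderiv ℝ K z (k a z) = 2 * (f a z).re) :
    ∀ a b, ∃ c : ℝ, ∀ z ∈ U,
      fderiv ℂ (f b) z (k a z) - fderiv ℂ (f a) z (k b z) = Complex.I * c := by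
  intro a b
  set g : (Fin n → ℂ) → ℂ :=
    fun z => fderiv ℂ (f b) z (k a z) - fderiv ℂ (f a) z (k b z) with hgdef
  have hre : ∀ z ∈ U, (g z).re = 0 :=
    re_part_zero n m U hUopen k hk hcomm K hK f hf hKf a b
  -- local constancy of g
  have hloc : ∀ z ∈ U, ∃ r > 0, ball z r ⊆ U ∧ ∀ w ∈ ball z r, g w = g z := by
    intro z hz
    obtain ⟨r, hr, hrU⟩ := Metric.isOpen_iff.1 hUopen z hz
    refine ⟨r, hr, hrU, ?_⟩
    intro w hw
    rcases eq_or_ne w z with hwz | hwz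
    · rw [hwz]
    · set d := w - z with hddef
      have hdpos : 0 < ‖d‖ := by
        rw [norm_pos_iff]
        simpa [hddef, sub_eq_zero] using hwz
      set R : ℝ := r / ‖d‖ with hRdef
      have hwr : ‖d‖ < r := by
        have : dist w z < r := mem_ball.mp hw
        simpa [hddef, dist_eq_norm] using this
      have hR1 : 1 < R := by
        rw [hRdef, lt_div_iff₀ hdpos, one_mul]
        exact hwr
      have hR0 : (0:ℝ) < R := lt_trans one_pos hR1
      set γ : ℂ → (Fin n → ℂ) := fun t => z + t • d with hγdef
      have hγT : ∀ t ∈ ball (0:ℂ) R, γ t ∈ ball z r := by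
        intro t ht
        have htn : ‖t‖ < R := by simpa [dist_zero_right] using ht
        simp only [hγdef, mem_ball, dist_eq_norm, add_sub_cancel_left]
        rw [norm_smul]
        calc ‖t‖ * ‖d‖ < R * ‖d‖ := by
              exact mul_lt_mul_of_pos_right htn hdpos
          _ = r := by
              rw [hRdef]
              field_simp
      have hγU : ∀ t ∈ ball (0:ℂ) R, γ t ∈ U := fun t ht => hrU (hγT t ht)
      have hγdiff : DifferentiableOn ℂ γ (ball (0:ℂ) R) :=
        ((differentiable_id.smul_const d).const_add z).differentiableOn
      have hva : DifferentiableOn ℂ (fun t => k a (γ t)) (ball (0:ℂ) R) :=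
        (hk a).comp hγdiff (fun t ht => hγU t ht)
      have hvb : DifferentiableOn ℂ (fun t => k b (γ t)) (ball (0:ℂ) R) :=
        (hk b).comp hγdiff (fun t ht => hγU t ht)
      have hG1 := keyHolo hUopen (hf b) isOpen_ball hγdiff hva hγU
      have hG2 := keyHolo hUopen (hf a) isOpen_ball hγdiff hvb hγU
      set G : ℂ → ℂ := fun t =>
        fderiv ℂ (f b) (γ t) (k a (γ t)) - fderiv ℂ (f a) (γ t) (k b (γ t)) with hGdef
      have hGdiff : DifferentiableOn ℂ G (ball (0:ℂ) R) := hG1.sub hG2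
      have hfd0 : ∀ t ∈ ball (0:ℂ) R, fderivWithin ℂ G (ball (0:ℂ) R) t = 0 := by
        intro t ht
        rw [fderivWithin_of_isOpen isOpen_ball ht]
        have hGd : DifferentiableAt ℂ G t :=
          (hGdiff t ht).differentiableAt (isOpen_ball.mem_nhds ht)
        have hre0 : fderiv ℝ (fun t => (G t).re) t = 0 := by
          have hev : (fun t => (G t).re) =ᶠ[nhds t] (fun _ => (0:ℝ)) := by
            filter_upwards [isOpen_ball.eventually_mem ht] with y hy
            exact hre (γ y) (hγU y hy)
          rw [hev.fderiv_eq]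
          exact fderiv_const_apply 0
        have hre1 : fderiv ℝ (fun t => (G t).re) t
            = Complex.reCLM.comp ((fderiv ℂ G t).restrictScalars ℝ) :=
          (Complex.reCLM.hasFDerivAt.comp t (hGd.hasFDerivAt.restrictScalars ℝ)).fderiv
        have hkey : ∀ u : ℂ, ((fderiv ℂ G t) u).re = 0 := by
          intro u
          have := congrArg (fun (L : ℂ →L[ℝ] ℝ) => L u) (hre1.symm.trans hre0)
          simpa using this
        have hmul : ∀ u : ℂ, (fderiv ℂ G t) u = u * (fderiv ℂ G t) 1 := by
          intro u
          have := (fderiv ℂ G t).map_smul u (1:ℂ)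
          simpa [smul_eq_mul] using this
        have hw1 : (fderiv ℂ G t) 1 = 0 := by
          have h1 := hkey 1
          have h2 := hkey I
          rw [hmul I] at h2
          apply Complex.ext
          · simpa using h1
          · simpa [Complex.mul_re] using h2
        apply ContinuousLinearMap.ext
        intro u
        rw [hmul u, hw1]
        simp
      have hmem0 : (0:ℂ) ∈ ball (0:ℂ) R := mem_ball_self hR0
      have hmem1 : (1:ℂ) ∈ ball (0:ℂ) R := by
        simp only [mem_ball, dist_zero_right]
        simpa using hR1
      have hconst := (convex_ball (0:ℂ) R).is_const_of_fderivWithin_eq_zero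
        hGdiff hfd0 hmem1 hmem0
      have hγ1 : γ 1 = w := by
        simp [hγdef, hddef]
      have hγ0 : γ 0 = z := by simp [hγdef]
      calc g w = G 1 := by rw [hGdef]; simp only [hγ1]; rfl
        _ = G 0 := hconst
        _ = g z := by rw [hGdef]; simp only [hγ0]; rfl
  -- global constancy on the connected set U
  obtain ⟨z₀, hz₀⟩ := hUconn.nonempty
  have hglob : ∀ z ∈ U, g z = g z₀ := by
    by_contra hcon
    push_neg at hcon
    obtain ⟨z₁, hz₁, hne⟩ := hcon
    set A : Set (Fin n → ℂ) := {z | z ∈ U ∧ g z = g z₀} with hAdef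
    set B : Set (Fin n → ℂ) := {z | z ∈ U ∧ g z ≠ g z₀} with hBdef
    have hAopen : IsOpen A := by
      rw [Metric.isOpen_iff]
      rintro z ⟨hzU, hzv⟩
      obtain ⟨r, hr, hrU, hconst⟩ := hloc z hzU
      exact ⟨r, hr, fun w hw => ⟨hrU hw, (hconst w hw).trans hzv⟩⟩
    have hBopen : IsOpen B := by
      rw [Metric.isOpen_iff]
      rintro z ⟨hzU, hzv⟩
      obtain ⟨r, hr, hrU, hconst⟩ := hloc z hzU
      exact ⟨r, hr, fun w hw => ⟨hrU hw, by rw [hconst w hw]; exact hzv⟩⟩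
    have hcover : U ⊆ A ∪ B := by
      intro z hz
      by_cases hzv : g z = g z₀
      · exact Or.inl ⟨hz, hzv⟩
      · exact Or.inr ⟨hz, hzv⟩
    have hA : (U ∩ A).Nonempty := ⟨z₀, hz₀, hz₀, rfl⟩
    have hB : (U ∩ B).Nonempty := ⟨z₁, hz₁, hz₁, hne⟩
    obtain ⟨x, _, hxA, hxB⟩ := hUconn.isPreconnected A B hAopen hBopen hcover hA hB
    exact hxB.2 hxA.2
  refine ⟨(g z₀).im, ?_⟩
  intro z hz
  rw [show fderiv ℂ (f b) z (k a z) - fderiv ℂ (f a) z (k b z) = g z from rfl,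
    hglob z hz]
  apply Complex.ext
  · simp [hre z₀ hz₀, Complex.mul_re]
  · simp [Complex.mul_im]
end

section
/- Let V be a finite-dimensional real vector space, J a complex structure on V (a linear endomorphism with J ∘ J = −id_V), and B a skew-symmetric bilinear form on V satisfying B(Ju, Jv) = −B(u, v) for all u, v ∈ V. Then the rank of B (the dimension of V minus the dimension of the radical {u ∈ V : B(u, v) = 0 for all v}) is divisible by 4. -/
/-- Auxiliary lemma: in the nondegenerate case, the dimension is divisible by 4. -/
theorem aux_nondeg_dim_dvd_four
    (Q : Type*) [AddCommGroup Q] [Module ℝ Q] [FiniteDimensional ℝ Q]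
    (J : Q →ₗ[ℝ] Q) (hJ : J ∘ₗ J = -LinearMap.id)
    (B : Q →ₗ[ℝ] Q →ₗ[ℝ] ℝ)
    (hskew : ∀ u v : Q, B u v = -B v u)
    (hanti : ∀ u v : Q, B (J u) (J v) = -B u v)
    (hnd : ∀ u : Q, B u = 0 → u = 0) :
    4 ∣ Module.finrank ℝ Q := by
  have hJJ : ∀ v : Q, J (J v) = -v := by
    intro v
    have := LinearMap.ext_iff.mp hJ v
    simpa using this
  -- B (J u) v = B u (J v)
  have hcomm : ∀ u v : Q, B (J u) v = B u (J v) := by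
    intro u v
    have h := hanti u (J v)
    rw [hJJ v] at h
    simp only [map_neg, LinearMap.neg_apply] at h
    linarith
  -- complex module structure via J
  have hI : (J * J : Module.End ℝ Q) = -1 := by
    rw [Module.End.mul_eq_comp, hJ]; rfl
  let φ : ℂ →ₐ[ℝ] Module.End ℝ Q := Complex.liftAux J hI
  letI : Module ℂ Q := Module.compHom Q φ.toRingHom
  have hsmul : ∀ (z : ℂ) (q : Q), z • q = z.re • q + z.im • J q := by
    intro z q
    show φ z q = _
    rw [Complex.liftAux_apply]
    simp [Module.algebraMap_end_apply]
  haveI : IsScalarTower ℝ ℂ Q := by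
    constructor
    intro r z q
    rw [hsmul, hsmul]
    have h1 : (r • z).re = r * z.re := by simp [Complex.real_smul]
    have h2 : (r • z).im = r * z.im := by simp [Complex.real_smul]
    rw [h1, h2, smul_add, smul_smul, smul_smul]
  haveI : FiniteDimensional ℂ Q := Module.Finite.of_restrictScalars_finite ℝ ℂ Q
  -- the complex bilinear form C u v = B u v - i B u (J v)
  have key : ∀ (z : ℂ) (u v : Q),
      ((B u (z • v) : ℂ) - (B u (J (z • v)) : ℂ) * Complex.I)
        = z * ((B u v : ℂ) - (B u (J v) : ℂ) * Complex.I) := by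
    intro z u v
    rw [hsmul]
    have hJz : J (z.re • v + z.im • J v) = z.re • J v + z.im • (-v) := by
      simp [hJJ]
    rw [hJz]
    simp only [map_add, map_smul, LinearMap.add_apply, LinearMap.smul_apply, map_neg,
      LinearMap.neg_apply, smul_eq_mul]
    apply Complex.ext <;> simp <;> ring
  let C : Q →ₗ[ℂ] Q →ₗ[ℂ] ℂ :=
    { toFun := fun u =>
        { toFun := fun v => (B u v : ℂ) - (B u (J v) : ℂ) * Complex.I
          map_add' := by
            intro v w
            simp only [map_add, LinearMap.add_apply]
            push_cast
            ring
          map_smul' := by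
            intro z v
            simpa using key z u v }
      map_add' := by
        intro u₁ u₂
        apply LinearMap.ext
        intro v
        simp only [LinearMap.coe_mk, AddHom.coe_mk, map_add, LinearMap.add_apply]
        push_cast
        ring
      map_smul' := by
        intro z u
        apply LinearMap.ext
        intro v
        simp only [LinearMap.coe_mk, AddHom.coe_mk, RingHom.id_apply, LinearMap.smul_apply,
          smul_eq_mul]
        -- B (z • u) v = B u (z • v) via hcomm/hskew symmetry; compute directly
        rw [hsmul]
        simp only [map_add, map_smul, LinearMap.add_apply, LinearMap.smul_apply, smul_eq_mul]
        rw [hcomm u v, hanti u v]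
        apply Complex.ext <;> simp <;> ring }
  have hCapply : ∀ u v : Q, C u v = (B u v : ℂ) - (B u (J v) : ℂ) * Complex.I := by
    intro u v; rfl
  have hCskew : ∀ u v : Q, C u v = -C v u := by
    intro u v
    rw [hCapply, hCapply]
    have h1 : B v u = -B u v := hskew v u
    have h2 : B v (J u) = -B u (J v) := by
      have h := hcomm v u
      rw [hskew (J v) u] at h
      linarith
    rw [h1, h2]
    push_cast
    ring
  have hCsep : C.SeparatingLeft := by
    intro u h
    apply hnd
    apply LinearMap.ext
    intro v
    have := h v
    rw [hCapply] at this
    have hre := congrArg Complex.re this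
    simpa using hre
  -- matrix argument : skew nondegenerate complex matrix has even size
  classical
  set m := Module.finrank ℂ Q with hm
  let b := Module.finBasis ℂ Q
  let N := LinearMap.toMatrix₂ b b C
  have hNnd : N.Nondegenerate := (hCsep.toMatrix₂ b b).nondegenerate
  have hdet : N.det ≠ 0 := hNnd.det_ne_zero
  have hNT : N.transpose = -N := by
    apply Matrix.ext
    intro i j
    simp only [Matrix.transpose_apply, Matrix.neg_apply, N, LinearMap.toMatrix₂_apply]
    rw [hCskew (b j) (b i)]
  have heven : Even m := by
    have h1 : N.det = (-1 : ℂ) ^ m * N.det := by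
      conv_lhs => rw [← Matrix.det_transpose, hNT, Matrix.det_neg]
      simp [m]
    have h2 : ((-1 : ℂ) ^ m - 1) * N.det = 0 := by linear_combination -h1
    have h3 : (-1 : ℂ) ^ m = 1 := by
      rcases mul_eq_zero.mp h2 with h | h
      · exact sub_eq_zero.mp h
      · exact absurd h hdet
    exact (neg_one_pow_eq_one_iff_even (by norm_num : (-1 : ℂ) ≠ 1)).mp h3
  obtain ⟨k, hk⟩ := heven
  have htower : Module.finrank ℝ ℂ * Module.finrank ℂ Q = Module.finrank ℝ Q :=
    Module.finrank_mul_finrank ℝ ℂ Q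
  rw [Complex.finrank_real_complex, ← hm, hk] at htower
  exact ⟨k, by omega⟩

/-- If `J` is a complex structure on a finite-dimensional real
vector space `V` and `B` is a skew-symmetric bilinear form with
`B(Ju, Jv) = -B(u, v)`, then the rank of `B` (the dimension of `V` minus the
dimension of the radical of `B`) is divisible by 4. -/
theorem rank_of_anti_invariant_skew_form_dvd_four
    (V : Type*) [AddCommGroup V] [Module ℝ V] [FiniteDimensional ℝ V]
    (J : V →ₗ[ℝ] V) (hJ : J ∘ₗ J = -LinearMap.id)
    (B : V →ₗ[ℝ] V →ₗ[ℝ] ℝ)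
    (hskew : ∀ u v : V, B u v = -B v u)
    (hanti : ∀ u v : V, B (J u) (J v) = -B u v) :
    4 ∣ Module.finrank ℝ V - Module.finrank ℝ (LinearMap.ker B) := by
  have hJJ : ∀ v : V, J (J v) = -v := by
    intro v
    have := LinearMap.ext_iff.mp hJ v
    simpa using this
  have hcomm : ∀ u v : V, B (J u) v = B u (J v) := by
    intro u v
    have h := hanti u (J v)
    rw [hJJ v] at h
    simp only [map_neg, LinearMap.neg_apply] at h
    linarith
  set K := LinearMap.ker B with hK
  -- K is J-invariant
  have hJK : K ≤ K.comap J := by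
    intro u hu
    rw [Submodule.mem_comap, hK, LinearMap.mem_ker]
    apply LinearMap.ext
    intro v
    rw [hcomm u v]
    have : B u = 0 := LinearMap.mem_ker.mp hu
    simp [this]
  -- induced complex structure on the quotient
  let J' : (V ⧸ K) →ₗ[ℝ] (V ⧸ K) := K.mapQ K J hJK
  have hJ' : J' ∘ₗ J' = -LinearMap.id := by
    apply LinearMap.ext
    intro q
    obtain ⟨u, rfl⟩ := Submodule.Quotient.mk_surjective K q
    simp only [LinearMap.comp_apply, LinearMap.neg_apply, LinearMap.id_apply]
    simp only [J', Submodule.mapQ_apply, hJJ]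
    simp
  -- descend B to the quotient
  have h1 : ∀ u : V, K ≤ LinearMap.ker (B u) := by
    intro u v hv
    rw [LinearMap.mem_ker, hskew]
    have : B v = 0 := LinearMap.mem_ker.mp hv
    simp [this]
  let M : V →ₗ[ℝ] ((V ⧸ K) →ₗ[ℝ] ℝ) :=
    { toFun := fun u => K.liftQ (B u) (h1 u)
      map_add' := by
        intro u₁ u₂
        apply LinearMap.ext
        intro q
        obtain ⟨v, rfl⟩ := Submodule.Quotient.mk_surjective K q
        simp [Submodule.liftQ_apply]
      map_smul' := by
        intro r u
        apply LinearMap.ext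
        intro q
        obtain ⟨v, rfl⟩ := Submodule.Quotient.mk_surjective K q
        simp [Submodule.liftQ_apply] }
  have h2 : K ≤ LinearMap.ker M := by
    intro u hu
    rw [LinearMap.mem_ker]
    apply LinearMap.ext
    intro q
    obtain ⟨v, rfl⟩ := Submodule.Quotient.mk_surjective K q
    have : B u = 0 := LinearMap.mem_ker.mp hu
    simp [M, Submodule.liftQ_apply, this]
  let B' : (V ⧸ K) →ₗ[ℝ] (V ⧸ K) →ₗ[ℝ] ℝ := K.liftQ M h2
  have hB' : ∀ u v : V, B' (Submodule.Quotient.mk u) (Submodule.Quotient.mk v) = B u v := by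
    intro u v
    simp [B', M, Submodule.liftQ_apply]
  have hJ'mk : ∀ u : V, J' (Submodule.Quotient.mk u) = Submodule.Quotient.mk (J u) := by
    intro u
    simp only [J', Submodule.mapQ_apply]
  have hskew' : ∀ p q : V ⧸ K, B' p q = -B' q p := by
    intro p q
    obtain ⟨u, rfl⟩ := Submodule.Quotient.mk_surjective K p
    obtain ⟨v, rfl⟩ := Submodule.Quotient.mk_surjective K q
    rw [hB', hB', hskew]
  have hanti' : ∀ p q : V ⧸ K, B' (J' p) (J' q) = -B' p q := by
    intro p q
    obtain ⟨u, rfl⟩ := Submodule.Quotient.mk_surjective K p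
    obtain ⟨v, rfl⟩ := Submodule.Quotient.mk_surjective K q
    rw [hJ'mk, hJ'mk, hB', hB', hanti]
  have hnd' : ∀ p : V ⧸ K, B' p = 0 → p = 0 := by
    intro p hp
    obtain ⟨u, rfl⟩ := Submodule.Quotient.mk_surjective K p
    rw [Submodule.Quotient.mk_eq_zero]
    rw [hK, LinearMap.mem_ker]
    apply LinearMap.ext
    intro v
    rw [← hB' u v, hp]
    simp
  have hdvd : 4 ∣ Module.finrank ℝ (V ⧸ K) :=
    aux_nondeg_dim_dvd_four (V ⧸ K) J' hJ' B' hskew' hanti' hnd'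
  have hsum : Module.finrank ℝ (V ⧸ K) + Module.finrank ℝ K = Module.finrank ℝ V :=
    Submodule.finrank_quotient_add_finrank K
  obtain ⟨k, hk⟩ := hdvd
  exact ⟨k, by omega⟩
end
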